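/- Let 0 < q₁ < p₁ ≤ 1, 0 < q₂ < p₂ ≤ 1, let n, m ≥ 1, let α₁, α₂ ∈ (0,1], let M > 0, and let f : [0,1]² → ℝ satisfy the Lipschitz condition |f(s,t) - f(x,y)| ≤ M |s - x|^{α₁} |t - y|^{α₂} for all (s,t), (x,y) ∈ [0,1]². Then for every (x,y) ∈ [0,1]², |B_{n,m}(f;x,y) - f(x,y)| ≤ M ( (p₁^{n-1}/[n]_{p₁,q₁})(x - x²) )^{α₁/2} ( (p₂^{m-1}/[m]_{p₂,q₂})(y - y²) )^{α₂/2}. -/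

import Mathlib

open Finset Set Filter Topology

/-- The (p,q)-integer `[n]_{p,q} = ∑_{i=0}^{n-1} p^(n-1-i) q^i`. -/
noncomputable def pqInt (p q : ℝ) (n : ℕ) : ℝ :=
  ∑ i ∈ Finset.range n, p ^ (n - 1 - i) * q ^ i

/-- The (p,q)-factorial `[n]_{p,q}! = ∏_{j=1}^n [j]_{p,q}`. -/
noncomputable def pqFactorial (p q : ℝ) (n : ℕ) : ℝ :=
  ∏ j ∈ Finset.range n, pqInt p q (j + 1)

/-- The (p,q)-binomial coefficient. -/
noncomputable def pqChoose (p q : ℝ) (n k : ℕ) : ℝ :=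
  pqFactorial p q n / (pqFactorial p q k * pqFactorial p q (n - k))

/-- The node `p^(n-k) [k]_{p,q} / [n]_{p,q}` of the (p,q)-Bernstein operator. -/
noncomputable def pqNode (p q : ℝ) (n k : ℕ) : ℝ :=
  p ^ (n - k) * pqInt p q k / pqInt p q n

/-- The basis function
`p^((k(k-1)-n(n-1))/2) C(n,k)_{p,q} x^k ∏_{s=0}^{n-k-1} (p^s - q^s x)`,
where `p^((k(k-1)-n(n-1))/2)` is written as `p^(k(k-1)/2) / p^(n(n-1)/2)`. -/
noncomputable def pqBasis (p q : ℝ) (n k : ℕ) (x : ℝ) : ℝ :=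
  (p ^ (k.choose 2) / p ^ (n.choose 2)) * pqChoose p q n k * x ^ k *
    ∏ s ∈ Finset.range (n - k), (p ^ s - q ^ s * x)

/-- The (p,q)-Bernstein operator `B_{n,p,q}(f;x)`. -/
noncomputable def pqBernstein (p q : ℝ) (n : ℕ) (f : ℝ → ℝ) (x : ℝ) : ℝ :=
  ∑ k ∈ Finset.range (n + 1), pqBasis p q n k x * f (pqNode p q n k)

/-- The bivariate (p,q)-Bernstein operator
`B_{n,m}^{(p₁,q₁),(p₂,q₂)}(f;x,y)`. -/
noncomputable def pqBernstein2 (p₁ q₁ p₂ q₂ : ℝ) (n m : ℕ)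
    (f : ℝ → ℝ → ℝ) (x y : ℝ) : ℝ :=
  ∑ k ∈ Finset.range (n + 1), ∑ j ∈ Finset.range (m + 1),
    pqBasis p₁ q₁ n k x * pqBasis p₂ q₂ m j y *
      f (pqNode p₁ q₁ n k) (pqNode p₂ q₂ m j)

/-!
`B_{n,m}` is a tensor product of two positive linear functionals that reproduce constants,
so by the Lipschitz condition the error is at most
`M (∑ₖ wₖ |aₖ - x|^α₁) (∑ⱼ vⱼ |bⱼ - y|^α₂)`, and Jensen's inequality for the concave
map `z ↦ z^(α/2)` bounds each factor by the `α/2`-th power of the second central moment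
of the univariate operator. That moment equals `p^(n-1)/[n]_{p,q} · (x - x²)`; it follows
from the first two moments, which are computed through the `(p,q)`-Pascal rule and the
absorption identity `[k+1] C(n+1,k+1) = [n+1] C(n,k)`.
-/

section PqNumbers

variable {p q : ℝ}

lemma pqInt_zero (p q : ℝ) : pqInt p q 0 = 0 := by simp [pqInt]

lemma pqInt_one (p q : ℝ) : pqInt p q 1 = 1 := by simp [pqInt]

lemma pqInt_add (p q : ℝ) (a b : ℕ) :
    pqInt p q (a + b) = p ^ b * pqInt p q a + q ^ a * pqInt p q b := by
  simp only [pqInt, Finset.sum_range_add, Finset.mul_sum]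
  congr 1 <;> refine Finset.sum_congr rfl fun i hi => ?_
  · rw [show a + b - 1 - i = b + (a - 1 - i) by have := Finset.mem_range.mp hi; omega, pow_add]
    ring
  · rw [show a + b - 1 - (a + i) = b - 1 - i by omega, pow_add]
    ring

lemma pqInt_succ (p q : ℝ) (n : ℕ) : pqInt p q (n + 1) = p ^ n + q * pqInt p q n := by
  rw [add_comm, pqInt_add, pqInt_one, pow_one, mul_one]

lemma pqInt_nonneg (hp : 0 ≤ p) (hq : 0 ≤ q) (n : ℕ) : 0 ≤ pqInt p q n :=
  Finset.sum_nonneg fun _ _ => by positivity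

lemma pqInt_pos (hp : 0 < p) (hq : 0 < q) {n : ℕ} (hn : n ≠ 0) : 0 < pqInt p q n :=
  Finset.sum_pos (fun _ _ => by positivity) (Finset.nonempty_range_iff.mpr hn)

lemma pqFactorial_zero (p q : ℝ) : pqFactorial p q 0 = 1 := by simp [pqFactorial]

lemma pqFactorial_succ (p q : ℝ) (n : ℕ) :
    pqFactorial p q (n + 1) = pqFactorial p q n * pqInt p q (n + 1) :=
  Finset.prod_range_succ _ _

lemma pqFactorial_pos (hp : 0 < p) (hq : 0 < q) (n : ℕ) : 0 < pqFactorial p q n :=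
  Finset.prod_pos fun _ _ => pqInt_pos hp hq (Nat.succ_ne_zero _)

lemma pqChoose_pos (hp : 0 < p) (hq : 0 < q) (n k : ℕ) : 0 < pqChoose p q n k := by
  have := pqFactorial_pos hp hq
  exact div_pos (this n) (mul_pos (this k) (this (n - k)))

lemma pqChoose_zero_right (hp : 0 < p) (hq : 0 < q) (n : ℕ) : pqChoose p q n 0 = 1 := by
  rw [pqChoose, pqFactorial_zero, one_mul, Nat.sub_zero, div_self (pqFactorial_pos hp hq n).ne']

lemma pqChoose_self (hp : 0 < p) (hq : 0 < q) (n : ℕ) : pqChoose p q n n = 1 := by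
  rw [pqChoose, Nat.sub_self, pqFactorial_zero, mul_one, div_self (pqFactorial_pos hp hq n).ne']

lemma pqChoose_succ_succ_mul_pqInt (hp : 0 < p) (hq : 0 < q) (n k : ℕ) :
    pqChoose p q (n + 1) (k + 1) * pqInt p q (k + 1) = pqInt p q (n + 1) * pqChoose p q n k := by
  have := (pqFactorial_pos hp hq n).ne'
  have := (pqFactorial_pos hp hq k).ne'
  have := (pqFactorial_pos hp hq (n - k)).ne'
  have := (pqInt_pos hp hq (Nat.succ_ne_zero k)).ne'
  rw [pqChoose, pqChoose, show n + 1 - (k + 1) = n - k by omega, pqFactorial_succ p q n,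
    pqFactorial_succ p q k]
  field_simp

lemma pqChoose_succ_succ (hp : 0 < p) (hq : 0 < q) {n k : ℕ} (hk : k + 1 ≤ n) :
    pqChoose p q (n + 1) (k + 1) =
      p ^ (k + 1) * pqChoose p q n (k + 1) + q ^ (n - k) * pqChoose p q n k := by
  obtain ⟨b, rfl⟩ : ∃ b, n = k + 1 + b := ⟨n - (k + 1), by omega⟩
  have hsplit : pqInt p q (k + 1 + b + 1) =
      p ^ (k + 1) * pqInt p q (b + 1) + q ^ (b + 1) * pqInt p q (k + 1) := by
    rw [show k + 1 + b + 1 = b + 1 + (k + 1) by omega, pqInt_add]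
  have := (pqFactorial_pos hp hq (k + 1 + b)).ne'
  have := (pqFactorial_pos hp hq k).ne'
  have := (pqFactorial_pos hp hq b).ne'
  have := (pqInt_pos hp hq (Nat.succ_ne_zero k)).ne'
  have := (pqInt_pos hp hq (Nat.succ_ne_zero b)).ne'
  simp only [pqChoose, show k + 1 + b + 1 - (k + 1) = b + 1 by omega,
    show k + 1 + b - (k + 1) = b by omega, show k + 1 + b - k = b + 1 by omega,
    pqFactorial_succ p q (k + 1 + b), pqFactorial_succ p q b, pqFactorial_succ p q k, hsplit]
  field_simp

end PqNumbers

section PqBinomialExpansion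

variable {p q : ℝ}

/-- Clearing the `n`-dependent factor `p ^ n.choose 2` of `pqBasis` makes the `(p,q)`-Pascal
rule act termwise. -/
noncomputable def pqBinomTerm (p q : ℝ) (n k : ℕ) (x : ℝ) : ℝ :=
  p ^ k.choose 2 * pqChoose p q n k * x ^ k * ∏ s ∈ Finset.range (n - k), (p ^ s - q ^ s * x)

lemma pqBasis_eq_pqBinomTerm_div (p q : ℝ) (n k : ℕ) (x : ℝ) :
    pqBasis p q n k x = pqBinomTerm p q n k x / p ^ n.choose 2 := by
  unfold pqBasis pqBinomTerm
  ring

lemma pqBinomTerm_succ_zero (hp : 0 < p) (hq : 0 < q) (n : ℕ) (x : ℝ) :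
    pqBinomTerm p q (n + 1) 0 x = pqBinomTerm p q n 0 x * (p ^ n - q ^ n * x) := by
  simp only [pqBinomTerm, pqChoose_zero_right hp hq, Nat.sub_zero, Finset.prod_range_succ]
  ring

lemma pqBinomTerm_succ_self (hp : 0 < p) (hq : 0 < q) (n : ℕ) (x : ℝ) :
    pqBinomTerm p q (n + 1) (n + 1) x = pqBinomTerm p q n n x * (p ^ n * x) := by
  simp only [pqBinomTerm, pqChoose_self hp hq, Nat.sub_self, Nat.choose_succ_succ,
    Nat.choose_one_right, pow_add, Finset.range_zero, Finset.prod_empty]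
  ring

lemma pqBinomTerm_succ_succ (hp : 0 < p) (hq : 0 < q) {n k : ℕ} (hk : k + 1 ≤ n) (x : ℝ) :
    pqBinomTerm p q (n + 1) (k + 1) x =
      pqBinomTerm p q n (k + 1) x * (p ^ n - p ^ (k + 1) * q ^ (n - (k + 1)) * x) +
        pqBinomTerm p q n k x * (p ^ k * q ^ (n - k) * x) := by
  obtain ⟨b, rfl⟩ : ∃ b, n = k + 1 + b := ⟨n - (k + 1), by omega⟩
  simp only [pqBinomTerm, show k + 1 + b + 1 - (k + 1) = b + 1 by omega,
    show k + 1 + b - (k + 1) = b by omega, show k + 1 + b - k = b + 1 by omega,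
    pqChoose_succ_succ hp hq hk, Nat.choose_succ_succ, Nat.choose_one_right, pow_add,
    Finset.prod_range_succ]
  ring

lemma sum_pqBinomTerm (hp : 0 < p) (hq : 0 < q) (x : ℝ) (n : ℕ) :
    ∑ k ∈ Finset.range (n + 1), pqBinomTerm p q n k x = p ^ n.choose 2 := by
  induction n with
  | zero => simp [pqBinomTerm, pqChoose_zero_right hp hq]
  | succ n ih =>
    set A : ℕ → ℝ := fun k => pqBinomTerm p q n k x * (p ^ n - p ^ k * q ^ (n - k) * x)
    set B : ℕ → ℝ := fun k => pqBinomTerm p q n k x * (p ^ k * q ^ (n - k) * x)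
    have hsplit : ∑ k ∈ Finset.range (n + 2), pqBinomTerm p q (n + 1) k x =
        ∑ k ∈ Finset.range (n + 1), A k + ∑ k ∈ Finset.range (n + 1), B k := by
      have hmid : ∑ k ∈ Finset.range n, pqBinomTerm p q (n + 1) (k + 1) x =
          ∑ k ∈ Finset.range n, (A (k + 1) + B k) :=
        Finset.sum_congr rfl fun k hk =>
          pqBinomTerm_succ_succ hp hq (Finset.mem_range.mp hk) x
      rw [Finset.sum_range_succ, Finset.sum_range_succ', hmid, pqBinomTerm_succ_zero hp hq,
        pqBinomTerm_succ_self hp hq, Finset.sum_range_succ (f := B),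
        Finset.sum_range_succ' (f := A), Finset.sum_add_distrib]
      simp only [A, B, pow_zero, one_mul, Nat.sub_zero, Nat.sub_self, mul_one]
      ring
    rw [hsplit, ← Finset.sum_add_distrib, Finset.sum_congr rfl fun k _ => (mul_add _ _ _).symm]
    simp only [sub_add_cancel]
    rw [← Finset.sum_mul, ih, Nat.choose_succ_succ, Nat.choose_one_right, pow_add]
    ring

end PqBinomialExpansion

section PqBernsteinMoments

variable {p q : ℝ}

lemma pqBinomTerm_succ_succ_mul_pqInt (hp : 0 < p) (hq : 0 < q) (n k : ℕ) (x : ℝ) :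
    pqBinomTerm p q (n + 1) (k + 1) x * pqInt p q (k + 1) =
      p ^ k * pqInt p q (n + 1) * x * pqBinomTerm p q n k x := by
  simp only [pqBinomTerm, Nat.add_sub_add_right, Nat.choose_succ_succ, Nat.choose_one_right,
    pow_add]
  linear_combination (p ^ k.choose 2 * p ^ k * x ^ k * x *
    ∏ s ∈ Finset.range (n - k), (p ^ s - q ^ s * x)) * pqChoose_succ_succ_mul_pqInt hp hq n k

lemma sum_pqBinomTerm_mul (hp : 0 < p) (hq : 0 < q) (x : ℝ) (n : ℕ) :
    ∑ k ∈ Finset.range (n + 1), pqBinomTerm p q n k x * (p ^ (n - k) * pqInt p q k) =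
      p ^ n.choose 2 * pqInt p q n * x := by
  cases n with
  | zero => simp [pqInt_zero]
  | succ m =>
    have hterm : ∀ k ∈ Finset.range (m + 1),
        pqBinomTerm p q (m + 1) (k + 1) x * (p ^ (m + 1 - (k + 1)) * pqInt p q (k + 1)) =
          p ^ m * pqInt p q (m + 1) * x * pqBinomTerm p q m k x := by
      intro k hk
      rw [show p ^ m = p ^ k * p ^ (m + 1 - (k + 1)) by
        rw [← pow_add]; congr 1; have := Finset.mem_range.mp hk; omega]
      linear_combination p ^ (m + 1 - (k + 1)) * pqBinomTerm_succ_succ_mul_pqInt hp hq m k x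
    rw [Finset.sum_range_succ', pqInt_zero, mul_zero, mul_zero, add_zero,
      Finset.sum_congr rfl hterm, ← Finset.mul_sum, sum_pqBinomTerm hp hq x m,
      Nat.choose_succ_succ, Nat.choose_one_right, pow_add]
    ring

lemma sum_pqBinomTerm_mul_sq (hp : 0 < p) (hq : 0 < q) (x : ℝ) (m : ℕ) :
    ∑ k ∈ Finset.range (m + 2),
        pqBinomTerm p q (m + 1) k x * (p ^ (m + 1 - k) * pqInt p q k) ^ 2 =
      p ^ (m + 1).choose 2 * pqInt p q (m + 1) * x * (p ^ m + q * pqInt p q m * x) := by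
  have hterm : ∀ k ∈ Finset.range (m + 1),
      pqBinomTerm p q (m + 1) (k + 1) x * (p ^ (m + 1 - (k + 1)) * pqInt p q (k + 1)) ^ 2 =
        pqInt p q (m + 1) * x * (p ^ (2 * m) * pqBinomTerm p q m k x +
          q * p ^ m * (pqBinomTerm p q m k x * (p ^ (m - k) * pqInt p q k))) := by
    intro k hk
    obtain ⟨b, rfl⟩ : ∃ b, m = k + b := ⟨m - k, by have := Finset.mem_range.mp hk; omega⟩
    rw [show k + b + 1 - (k + 1) = b by omega, show k + b - k = b by omega, two_mul, pow_add,
      pow_add]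
    linear_combination p ^ b * p ^ b * (p ^ k + q * pqInt p q k) *
        pqBinomTerm_succ_succ_mul_pqInt hp hq (k + b) k x +
      p ^ b * p ^ b * pqBinomTerm p q (k + b + 1) (k + 1) x * pqInt p q (k + 1) *
        pqInt_succ p q k
  rw [Finset.sum_range_succ', pqInt_zero, mul_zero, zero_pow two_ne_zero, mul_zero, add_zero,
    Finset.sum_congr rfl hterm, ← Finset.mul_sum, Finset.sum_add_distrib, ← Finset.mul_sum,
    ← Finset.mul_sum, sum_pqBinomTerm hp hq x m, sum_pqBinomTerm_mul hp hq x m,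
    Nat.choose_succ_succ, Nat.choose_one_right, pow_add, two_mul, pow_add]
  ring

lemma pqBasis_nonneg (hq : 0 < q) (hqp : q ≤ p) {x : ℝ} (hx : x ∈ Set.Icc (0 : ℝ) 1) (n k : ℕ) :
    0 ≤ pqBasis p q n k x := by
  have hp : 0 < p := hq.trans_le hqp
  have := pqChoose_pos hp hq n k
  have hfactor : ∀ s ∈ Finset.range (n - k), 0 ≤ p ^ s - q ^ s * x := fun s _ =>
    sub_nonneg.mpr <| (mul_le_of_le_one_right (by positivity) hx.2).trans
      (pow_le_pow_left₀ hq.le hqp s)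
  unfold pqBasis
  exact mul_nonneg (by have := hx.1; positivity) (Finset.prod_nonneg hfactor)

lemma sum_pqBasis (hp : 0 < p) (hq : 0 < q) (x : ℝ) (n : ℕ) :
    ∑ k ∈ Finset.range (n + 1), pqBasis p q n k x = 1 := by
  simp only [pqBasis_eq_pqBinomTerm_div, ← Finset.sum_div, sum_pqBinomTerm hp hq,
    div_self (pow_pos hp _).ne']

lemma pqNode_mem_Icc (hp : 0 < p) (hq : 0 < q) {n k : ℕ} (hk : k ≤ n) (hn : n ≠ 0) :
    pqNode p q n k ∈ Set.Icc (0 : ℝ) 1 := by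
  have hN : 0 < pqInt p q n := pqInt_pos hp hq hn
  obtain ⟨b, rfl⟩ : ∃ b, n = k + b := ⟨n - k, by omega⟩
  have hle : p ^ b * pqInt p q k ≤ pqInt p q (k + b) := by
    rw [pqInt_add]
    have := pqInt_nonneg hp.le hq.le b
    nlinarith [pow_pos hq k]
  rw [pqNode, Nat.add_sub_cancel_left]
  exact ⟨by have := pqInt_nonneg hp.le hq.le k; positivity, (div_le_one hN).mpr hle⟩

lemma sum_pqBasis_mul_pqNode (hp : 0 < p) (hq : 0 < q) (x : ℝ) {n : ℕ} (hn : n ≠ 0) :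
    ∑ k ∈ Finset.range (n + 1), pqBasis p q n k x * pqNode p q n k = x := by
  have hN := (pqInt_pos hp hq hn).ne'
  have hP := (pow_pos hp (n.choose 2)).ne'
  have hterm : ∀ k ∈ Finset.range (n + 1), pqBasis p q n k x * pqNode p q n k =
      pqBinomTerm p q n k x * (p ^ (n - k) * pqInt p q k) / (p ^ n.choose 2 * pqInt p q n) := by
    intro k _
    rw [pqBasis_eq_pqBinomTerm_div, pqNode]
    field_simp
  rw [Finset.sum_congr rfl hterm, ← Finset.sum_div, sum_pqBinomTerm_mul hp hq x n]
  field_simp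

lemma sum_pqBasis_mul_pqNode_sq (hp : 0 < p) (hq : 0 < q) (x : ℝ) (m : ℕ) :
    ∑ k ∈ Finset.range (m + 2), pqBasis p q (m + 1) k x * pqNode p q (m + 1) k ^ 2 =
      x * (p ^ m + q * pqInt p q m * x) / pqInt p q (m + 1) := by
  have hN := (pqInt_pos hp hq m.succ_ne_zero).ne'
  have hP := (pow_pos hp ((m + 1).choose 2)).ne'
  have hterm : ∀ k ∈ Finset.range (m + 2),
      pqBasis p q (m + 1) k x * pqNode p q (m + 1) k ^ 2 =
        pqBinomTerm p q (m + 1) k x * (p ^ (m + 1 - k) * pqInt p q k) ^ 2 /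
          (p ^ (m + 1).choose 2 * pqInt p q (m + 1) ^ 2) := by
    intro k _
    rw [pqBasis_eq_pqBinomTerm_div, pqNode]
    field_simp
  rw [Finset.sum_congr rfl hterm, ← Finset.sum_div, sum_pqBinomTerm_mul_sq hp hq x m]
  field_simp

lemma sum_pqBasis_mul_sub_sq (hp : 0 < p) (hq : 0 < q) (x : ℝ) {n : ℕ} (hn : n ≠ 0) :
    ∑ k ∈ Finset.range (n + 1), pqBasis p q n k x * (pqNode p q n k - x) ^ 2 =
      p ^ (n - 1) / pqInt p q n * (x - x ^ 2) := by
  obtain ⟨m, rfl⟩ := Nat.exists_eq_succ_of_ne_zero hn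
  have hN := (pqInt_pos hp hq m.succ_ne_zero).ne'
  have hexpand : ∀ k ∈ Finset.range (m + 2),
      pqBasis p q (m + 1) k x * (pqNode p q (m + 1) k - x) ^ 2 =
        pqBasis p q (m + 1) k x * pqNode p q (m + 1) k ^ 2 -
          2 * x * (pqBasis p q (m + 1) k x * pqNode p q (m + 1) k) +
            x ^ 2 * pqBasis p q (m + 1) k x := fun _ _ => by ring
  rw [Finset.sum_congr rfl hexpand, Finset.sum_add_distrib, Finset.sum_sub_distrib,
    ← Finset.mul_sum, ← Finset.mul_sum, sum_pqBasis_mul_pqNode_sq hp hq x m,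
    sum_pqBasis_mul_pqNode hp hq x hn, sum_pqBasis hp hq x, Nat.succ_sub_one]
  field_simp
  linear_combination (-(x ^ 2)) * pqInt_succ p q m

end PqBernsteinMoments

lemma sum_mul_abs_rpow_le_sum_mul_sq_rpow {ι : Type*} {s : Finset ι} {w : ι → ℝ}
    (hw : ∀ i ∈ s, 0 ≤ w i) (hw1 : ∑ i ∈ s, w i = 1) (d : ι → ℝ) {α : ℝ} (hα : α ∈ Set.Icc 0 2) :
    ∑ i ∈ s, w i * |d i| ^ α ≤ (∑ i ∈ s, w i * d i ^ 2) ^ (α / 2) := by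
  have hconc : ConcaveOn ℝ (Set.Ici 0) fun z : ℝ => z ^ (α / 2) :=
    Real.concaveOn_rpow (by linarith [hα.1]) (by linarith [hα.2])
  have hsq : ∀ i, |d i| ^ α = (d i ^ 2) ^ (α / 2) := fun i => by
    rw [← sq_abs, ← Real.rpow_natCast, ← Real.rpow_mul (abs_nonneg _)]
    ring_nf
  simpa only [hsq, smul_eq_mul] using
    hconc.le_map_sum hw hw1 fun i _ => Set.mem_Ici.mpr (sq_nonneg (d i))

lemma abs_sum_sum_mul_sub_le {ι κ : Type*} {s : Finset ι} {t : Finset κ} {w : ι → ℝ}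
    {v : κ → ℝ} (hw : ∀ i ∈ s, 0 ≤ w i) (hw1 : ∑ i ∈ s, w i = 1) (hv : ∀ j ∈ t, 0 ≤ v j)
    (hv1 : ∑ j ∈ t, v j = 1) {g : ι → κ → ℝ} {a : ι → ℝ} {b : κ → ℝ} {c M α β : ℝ}
    (hM : 0 ≤ M) (hα : α ∈ Set.Icc 0 2) (hβ : β ∈ Set.Icc 0 2)
    (hg : ∀ i ∈ s, ∀ j ∈ t, |g i j - c| ≤ M * |a i| ^ α * |b j| ^ β) :
    |∑ i ∈ s, ∑ j ∈ t, w i * v j * g i j - c| ≤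
      M * (∑ i ∈ s, w i * a i ^ 2) ^ (α / 2) * (∑ j ∈ t, v j * b j ^ 2) ^ (β / 2) := by
  have hc : ∑ i ∈ s, ∑ j ∈ t, w i * v j * g i j - c =
      ∑ i ∈ s, ∑ j ∈ t, w i * v j * (g i j - c) := by
    simp only [mul_sub, Finset.sum_sub_distrib, ← Finset.sum_mul, ← Finset.mul_sum, hv1, hw1,
      mul_one, one_mul]
  have hA := sum_mul_abs_rpow_le_sum_mul_sq_rpow hw hw1 a hα
  have hB := sum_mul_abs_rpow_le_sum_mul_sq_rpow hv hv1 b hβ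
  have hB0 : 0 ≤ ∑ j ∈ t, v j * |b j| ^ β :=
    Finset.sum_nonneg fun j hj => mul_nonneg (hv j hj) (by positivity)
  calc |∑ i ∈ s, ∑ j ∈ t, w i * v j * g i j - c|
      ≤ ∑ i ∈ s, ∑ j ∈ t, |w i * v j * (g i j - c)| := by
        rw [hc]
        exact (Finset.abs_sum_le_sum_abs _ _).trans
          (Finset.sum_le_sum fun i _ => Finset.abs_sum_le_sum_abs _ _)
    _ ≤ ∑ i ∈ s, ∑ j ∈ t, w i * v j * (M * |a i| ^ α * |b j| ^ β) := by
        refine Finset.sum_le_sum fun i hi => Finset.sum_le_sum fun j hj => ?_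
        rw [abs_mul, abs_of_nonneg (mul_nonneg (hw i hi) (hv j hj))]
        exact mul_le_mul_of_nonneg_left (hg i hi j hj) (mul_nonneg (hw i hi) (hv j hj))
    _ = M * (∑ i ∈ s, w i * |a i| ^ α) * ∑ j ∈ t, v j * |b j| ^ β := by
        rw [mul_assoc, Finset.sum_mul_sum, Finset.mul_sum]
        refine Finset.sum_congr rfl fun i _ => ?_
        rw [Finset.mul_sum]
        exact Finset.sum_congr rfl fun j _ => by ring
    _ ≤ M * (∑ i ∈ s, w i * a i ^ 2) ^ (α / 2) * (∑ j ∈ t, v j * b j ^ 2) ^ (β / 2) :=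
        mul_le_mul (mul_le_mul_of_nonneg_left hA hM) hB hB0
          (mul_nonneg hM (Real.rpow_nonneg (Finset.sum_nonneg fun i hi =>
            mul_nonneg (hw i hi) (sq_nonneg _)) _))

theorem pqBernstein2_rate_lipschitz_general (p₁ q₁ p₂ q₂ : ℝ) (n m : ℕ)
    (hq₁ : 0 < q₁) (hq₁p₁ : q₁ < p₁)
    (hq₂ : 0 < q₂) (hq₂p₂ : q₂ < p₂)
    (hn : 1 ≤ n) (hm : 1 ≤ m)
    (α₁ α₂ : ℝ) (hα₁ : α₁ ∈ Set.Ioc (0 : ℝ) 1) (hα₂ : α₂ ∈ Set.Ioc (0 : ℝ) 1)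
    (M : ℝ) (hM : 0 < M) (f : ℝ → ℝ → ℝ)
    (hf : ∀ s ∈ Set.Icc (0 : ℝ) 1, ∀ t ∈ Set.Icc (0 : ℝ) 1,
      ∀ x ∈ Set.Icc (0 : ℝ) 1, ∀ y ∈ Set.Icc (0 : ℝ) 1,
      |f s t - f x y| ≤ M * |s - x| ^ α₁ * |t - y| ^ α₂)
    (x y : ℝ) (hx : x ∈ Set.Icc (0 : ℝ) 1) (hy : y ∈ Set.Icc (0 : ℝ) 1) :
    |pqBernstein2 p₁ q₁ p₂ q₂ n m f x y - f x y| ≤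
      M * ((p₁ ^ (n - 1) / pqInt p₁ q₁ n) * (x - x ^ 2)) ^ (α₁ / 2) *
        ((p₂ ^ (m - 1) / pqInt p₂ q₂ m) * (y - y ^ 2)) ^ (α₂ / 2) := by
  have hp₁ : 0 < p₁ := hq₁.trans hq₁p₁
  have hp₂ : 0 < p₂ := hq₂.trans hq₂p₂
  have hn0 : n ≠ 0 := Nat.one_le_iff_ne_zero.mp hn
  have hm0 : m ≠ 0 := Nat.one_le_iff_ne_zero.mp hm
  rw [← sum_pqBasis_mul_sub_sq hp₁ hq₁ x hn0, ← sum_pqBasis_mul_sub_sq hp₂ hq₂ y hm0]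
  refine abs_sum_sum_mul_sub_le (fun k _ => pqBasis_nonneg hq₁ hq₁p₁.le hx n k)
    (sum_pqBasis hp₁ hq₁ x n) (fun j _ => pqBasis_nonneg hq₂ hq₂p₂.le hy m j)
    (sum_pqBasis hp₂ hq₂ y m) hM.le ⟨hα₁.1.le, by linarith [hα₁.2]⟩
    ⟨hα₂.1.le, by linarith [hα₂.2]⟩ fun k hk j hj => ?_
  exact hf _ (pqNode_mem_Icc hp₁ hq₁ (Nat.lt_succ_iff.mp (Finset.mem_range.mp hk)) hn0)
    _ (pqNode_mem_Icc hp₂ hq₂ (Nat.lt_succ_iff.mp (Finset.mem_range.mp hj)) hm0) x hx y hy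

theorem pqBernstein2_rate_lipschitz (p₁ q₁ p₂ q₂ : ℝ) (n m : ℕ)
    (hq₁ : 0 < q₁) (hq₁p₁ : q₁ < p₁) (hp₁ : p₁ ≤ 1)
    (hq₂ : 0 < q₂) (hq₂p₂ : q₂ < p₂) (hp₂ : p₂ ≤ 1)
    (hn : 1 ≤ n) (hm : 1 ≤ m)
    (α₁ α₂ : ℝ) (hα₁ : α₁ ∈ Set.Ioc (0 : ℝ) 1) (hα₂ : α₂ ∈ Set.Ioc (0 : ℝ) 1)
    (M : ℝ) (hM : 0 < M) (f : ℝ → ℝ → ℝ)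
    (hf : ∀ s ∈ Set.Icc (0 : ℝ) 1, ∀ t ∈ Set.Icc (0 : ℝ) 1,
      ∀ x ∈ Set.Icc (0 : ℝ) 1, ∀ y ∈ Set.Icc (0 : ℝ) 1,
      |f s t - f x y| ≤ M * |s - x| ^ α₁ * |t - y| ^ α₂)
    (x y : ℝ) (hx : x ∈ Set.Icc (0 : ℝ) 1) (hy : y ∈ Set.Icc (0 : ℝ) 1) :
    |pqBernstein2 p₁ q₁ p₂ q₂ n m f x y - f x y| ≤
      M * ((p₁ ^ (n - 1) / pqInt p₁ q₁ n) * (x - x ^ 2)) ^ (α₁ / 2) *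
        ((p₂ ^ (m - 1) / pqInt p₂ q₂ m) * (y - y ^ 2)) ^ (α₂ / 2) :=
  pqBernstein2_rate_lipschitz_general p₁ q₁ p₂ q₂ n m hq₁ hq₁p₁ hq₂ hq₂p₂ hn hm α₁ α₂ hα₁ hα₂ M hM f
    hf x y hx hy
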